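/- arXiv:1307.0964 — 4 statements merged into one kernel-verified Lean document; each statement's English description precedes it below -/
import Mathlib

section
/- Let n ≥ 2 and let A be an n×n real matrix with nonnegative entries, spectral radius r(A) = 1, and a_{11} = 0. Then the spread of A satisfies s(A) ≥ 1/n. -/
/-! Let `λ` be an eigenvalue with `|λ| = r(A) = 1`. Then
`n = |nλ| ≤ |∑_μ (μ - λ)| + |∑_μ μ| ≤ n s(A) + tr A`. For a nonnegative matrix every diagonal
entry is at most `r(A)`, since `a_ii^m ≤ (A^m)_ii ≤ tr A^m = ∑_μ μ^m ≤ n r(A)^m` (taking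
`m = 2^k`, so that the eigenvalues of `A^m` follow by repeated squaring from
`t² - M² = (t + M)(t - M)`). With `a_11 = 0` this gives `tr A ≤ n - 1`, hence `n s(A) ≥ 1`. -/

open Matrix Polynomial

/-- The eigenvalues of a real square matrix: the multiset of roots (with multiplicity)
of its characteristic polynomial over `ℂ`. -/
noncomputable def eigs {n : ℕ} (A : Matrix (Fin n) (Fin n) ℝ) : Multiset ℂ :=
  ((A.map Complex.ofReal).charpoly).roots

/-- The spectral radius: the maximum of `|λ|` over the eigenvalues `λ`. -/
noncomputable def specRad {n : ℕ} (A : Matrix (Fin n) (Fin n) ℝ) : ℝ :=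
  sSup {r : ℝ | ∃ μ ∈ eigs A, r = ‖μ‖}

/-- The spread: the maximum of `|λ - μ|` over pairs of eigenvalues `λ, μ`. -/
noncomputable def spread {n : ℕ} (A : Matrix (Fin n) (Fin n) ℝ) : ℝ :=
  sSup {r : ℝ | ∃ μ ∈ eigs A, ∃ ν ∈ eigs A, r = ‖μ - ν‖}

theorem norm_multiset_sum_le_card_mul {E : Type*} [SeminormedAddCommGroup E] {s : Multiset E}
    {c : ℝ} (h : ∀ x ∈ s, ‖x‖ ≤ c) : ‖s.sum‖ ≤ s.card * c := by
  calc ‖s.sum‖ ≤ (s.map norm).sum := norm_multiset_sum_le s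
    _ ≤ (s.map norm).card • c :=
        Multiset.sum_le_card_nsmul _ _ (by simpa using h)
    _ = s.card * c := by simp

open Filter Topology in
theorem le_of_forall_pow_two_pow_le_mul_pow {a b C : ℝ} (hb : 0 ≤ b)
    (h : ∀ k : ℕ, a ^ 2 ^ k ≤ C * b ^ 2 ^ k) : a ≤ b := by
  by_contra! hba
  have ha : 0 < a := hb.trans_lt hba
  have hq : b / a < 1 := (div_lt_one ha).mpr hba
  have hlim : Tendsto (fun k : ℕ => C * (b / a) ^ 2 ^ k) atTop (𝓝 0) := by
    simpa using ((tendsto_pow_atTop_nhds_zero_of_lt_one (div_nonneg hb ha.le) hq).comp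
      (tendsto_pow_atTop_atTop_of_one_lt (α := ℕ) one_lt_two)).const_mul C
  obtain ⟨k, hk⟩ := (hlim.eventually (gt_mem_nhds one_pos)).exists
  have hak : 0 < a ^ 2 ^ k := pow_pos ha _
  have : 1 ≤ C * (b / a) ^ 2 ^ k := by
    rw [div_pow, ← mul_div_assoc, le_div_iff₀ hak, one_mul]
    exact h k
  linarith

namespace Matrix

theorem apply_self_pow_le_pow_apply_self {ι R : Type*} [Fintype ι] [DecidableEq ι]
    [Semiring R] [PartialOrder R] [IsOrderedRing R] {A : Matrix ι ι R}
    (hA : ∀ i j, 0 ≤ A i j) (i : ι) (k : ℕ) : A i i ^ k ≤ (A ^ k) i i := by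
  induction k with
  | zero => simp
  | succ k ih =>
    rw [pow_succ, pow_succ, mul_apply]
    calc A i i ^ k * A i i ≤ (A ^ k) i i * A i i := mul_le_mul_of_nonneg_right ih (hA i i)
      _ ≤ ∑ j, (A ^ k) i j * A j i :=
        Finset.single_le_sum (f := fun j => (A ^ k) i j * A j i)
          (fun j _ => mul_nonneg (pow_apply_nonneg hA k i j) (hA j i)) (Finset.mem_univ i)

theorem trace_le_card_sub_one {ι R : Type*} [Fintype ι] [DecidableEq ι] [Ring R]
    [PartialOrder R] [IsOrderedRing R] {A : Matrix ι ι R} (h1 : ∀ i, A i i ≤ 1) {i₀ : ι}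
    (h0 : A i₀ i₀ = 0) :
    A.trace ≤ Fintype.card ι - 1 := by
  rw [trace, ← Finset.add_sum_erase _ _ (Finset.mem_univ i₀), diag_apply, h0, zero_add,
    Finset.card_univ.symm, ← Finset.cast_card_erase_of_mem (Finset.mem_univ i₀), ← nsmul_one]
  exact Finset.sum_le_card_nsmul _ _ _ fun i _ => h1 i

variable {ι K : Type*} [Fintype ι] [DecidableEq ι] [Field K] [IsAlgClosed K]

theorem det_scalar_sub_eq_prod_roots_charpoly (M : Matrix ι ι K) (x : K) :
    (scalar ι x - M).det = (M.charpoly.roots.map (x - ·)).prod := by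
  rw [← eval_charpoly, (IsAlgClosed.splits M.charpoly).eq_prod_roots_of_monic M.charpoly_monic,
    eval_multiset_prod, Multiset.map_map]
  simp

theorem det_scalar_add_eq_prod_roots_charpoly (M : Matrix ι ι K) (x : K) :
    (scalar ι x + M).det = (M.charpoly.roots.map (x + ·)).prod := by
  have hcard : M.charpoly.roots.card = Fintype.card ι := by
    rw [IsAlgClosed.card_roots_eq_natDegree, charpoly_natDegree_eq_dim]
  have hneg : scalar ι x + M = -(scalar ι (-x) - M) := by
    rw [neg_sub, map_neg, sub_neg_eq_add, add_comm]
  rw [hneg, det_neg, det_scalar_sub_eq_prod_roots_charpoly, ← hcard,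
    ← Multiset.card_map (fun a => -x - a), ← Multiset.prod_map_neg, Multiset.map_map]
  congr 1
  refine Multiset.map_congr rfl fun a _ => ?_
  simp [add_comm]

theorem roots_charpoly_mul_self (M : Matrix ι ι K) :
    (M * M).charpoly.roots = M.charpoly.roots.map (fun a => a * a) := by
  suffices h : (M * M).charpoly = ((M.charpoly.roots.map (fun a => a * a)).map (X - C ·)).prod by
    rw [h, roots_multiset_prod_X_sub_C]
  refine Polynomial.funext fun y => ?_
  obtain ⟨x, rfl⟩ := IsAlgClosed.exists_eq_mul_self y
  have hfactor : scalar ι (x * x) - M * M = (scalar ι x + M) * (scalar ι x - M) := by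
    rw [map_mul, (scalar_commute x (Commute.all x) M).mul_self_sub_mul_self_eq]
  rw [eval_charpoly, hfactor, det_mul, det_scalar_add_eq_prod_roots_charpoly,
    det_scalar_sub_eq_prod_roots_charpoly, ← Multiset.prod_map_mul, eval_multiset_prod,
    Multiset.map_map, Multiset.map_map]
  congr 1
  refine Multiset.map_congr rfl fun a _ => ?_
  simp only [Function.comp_apply, eval_sub, eval_X, eval_C]
  ring

theorem roots_charpoly_pow_two_pow (M : Matrix ι ι K) (k : ℕ) :
    (M ^ 2 ^ k).charpoly.roots = M.charpoly.roots.map (· ^ 2 ^ k) := by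
  induction k with
  | zero => simp
  | succ k ih =>
    rw [pow_succ, pow_mul, sq, roots_charpoly_mul_self, ih, Multiset.map_map]
    refine Multiset.map_congr rfl fun a _ => ?_
    simp [pow_mul, sq]

theorem trace_pow_two_pow_eq_sum_roots_charpoly (M : Matrix ι ι K) (k : ℕ) :
    (M ^ 2 ^ k).trace = (M.charpoly.roots.map (· ^ 2 ^ k)).sum := by
  rw [trace_eq_sum_roots_charpoly, roots_charpoly_pow_two_pow]

end Matrix

section Eigenvalues

variable {n : ℕ} (A : Matrix (Fin n) (Fin n) ℝ)

theorem card_eigs : (eigs A).card = n := by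
  rw [eigs, IsAlgClosed.card_roots_eq_natDegree, charpoly_natDegree_eq_dim, Fintype.card_fin]

theorem trace_pow_two_pow_eq_sum_eigs (k : ℕ) :
    ((A ^ 2 ^ k).trace : ℂ) = ((eigs A).map (· ^ 2 ^ k)).sum := by
  have hpow : (A ^ 2 ^ k).map Complex.ofReal = A.map Complex.ofReal ^ 2 ^ k :=
    map_pow Complex.ofRealHom.mapMatrix A _
  rw [eigs, ← trace_pow_two_pow_eq_sum_roots_charpoly, ← hpow]
  exact AddMonoidHom.map_trace Complex.ofRealHom _

theorem sum_eigs : (eigs A).sum = A.trace := by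
  simpa using (trace_pow_two_pow_eq_sum_eigs A 0).symm

theorem finite_norms_eigs : {r : ℝ | ∃ μ ∈ eigs A, r = ‖μ‖}.Finite := by
  convert (eigs A).finite_toSet.image norm using 1
  ext
  simp [eq_comm]

theorem norm_le_specRad {μ : ℂ} (hμ : μ ∈ eigs A) : ‖μ‖ ≤ specRad A :=
  le_csSup (finite_norms_eigs A).bddAbove ⟨μ, hμ, rfl⟩

theorem exists_norm_eq_specRad (hn : 0 < n) : ∃ μ ∈ eigs A, ‖μ‖ = specRad A := by
  obtain ⟨μ, hμ⟩ := Multiset.card_pos_iff_exists_mem.mp ((card_eigs A).symm ▸ hn)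
  obtain ⟨ν, hν, h⟩ := Set.Nonempty.csSup_mem (s := {r : ℝ | ∃ μ ∈ eigs A, r = ‖μ‖})
    ⟨_, μ, hμ, rfl⟩ (finite_norms_eigs A)
  exact ⟨ν, hν, h.symm⟩

theorem le_spread {μ ν : ℂ} (hμ : μ ∈ eigs A) (hν : ν ∈ eigs A) : ‖μ - ν‖ ≤ spread A := by
  refine le_csSup (Set.Finite.bddAbove ?_) ⟨μ, hμ, ν, hν, rfl⟩
  convert (eigs A).finite_toSet.image2 (fun μ ν => ‖μ - ν‖) (eigs A).finite_toSet using 1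
  ext
  simp [eq_comm]

theorem diag_le_specRad (hA : ∀ i j, 0 ≤ A i j) (i : Fin n) : A i i ≤ specRad A := by
  obtain ⟨μ₀, _, hμ₀⟩ := exists_norm_eq_specRad A i.pos
  refine le_of_forall_pow_two_pow_le_mul_pow (hμ₀ ▸ norm_nonneg μ₀) (C := n) fun k => ?_
  have hnorm : ∀ z ∈ (eigs A).map (· ^ 2 ^ k), ‖z‖ ≤ specRad A ^ 2 ^ k := by
    simp only [Multiset.mem_map]
    rintro _ ⟨μ, hμ, rfl⟩
    rw [norm_pow]
    exact pow_le_pow_left₀ (norm_nonneg μ) (norm_le_specRad A hμ) _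
  calc A i i ^ 2 ^ k ≤ (A ^ 2 ^ k) i i := apply_self_pow_le_pow_apply_self hA i _
    _ ≤ (A ^ 2 ^ k).trace :=
      Finset.single_le_sum (fun j _ => pow_apply_nonneg hA _ j j) (Finset.mem_univ i)
    _ ≤ ‖((A ^ 2 ^ k).trace : ℂ)‖ := by rw [Complex.norm_real]; exact Real.le_norm_self _
    _ = ‖((eigs A).map (· ^ 2 ^ k)).sum‖ := by rw [trace_pow_two_pow_eq_sum_eigs]
    _ ≤ n * specRad A ^ 2 ^ k := by
      simpa [card_eigs] using norm_multiset_sum_le_card_mul hnorm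

end Eigenvalues

theorem spread_ge_one_div_n (n : ℕ) (hn : 2 ≤ n) (A : Matrix (Fin n) (Fin n) ℝ)
    (hA : ∀ i j, 0 ≤ A i j) (hr : specRad A = 1)
    (h11 : A ⟨0, by omega⟩ ⟨0, by omega⟩ = 0) :
    (1 : ℝ) / n ≤ spread A := by
  obtain ⟨l, hl, hl1⟩ := exists_norm_eq_specRad A (by omega)
  have htr : A.trace ≤ n - 1 := by
    simpa using trace_le_card_sub_one (fun i => hr ▸ diag_le_specRad A hA i) h11
  have hnorm_sum : ‖(eigs A).sum‖ = A.trace := by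
    rw [sum_eigs, Complex.norm_real, Real.norm_of_nonneg]
    exact Finset.sum_nonneg fun i _ => hA i i
  have hdev : ‖(eigs A).sum - n * l‖ ≤ n * spread A := by
    have h : ∀ z ∈ (eigs A).map (· - l), ‖z‖ ≤ spread A := by
      simp only [Multiset.mem_map]
      rintro _ ⟨μ, hμ, rfl⟩
      exact le_spread A hμ hl
    simpa [Multiset.sum_map_sub, card_eigs] using norm_multiset_sum_le_card_mul h
  have hn_le : (n : ℝ) ≤ A.trace + n * spread A :=
    calc (n : ℝ) = ‖n * l‖ := by simp [hl1, hr]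
      _ ≤ ‖(eigs A).sum‖ + ‖(eigs A).sum - n * l‖ := by
        rw [norm_sub_rev]
        exact norm_le_insert' _ _
      _ ≤ A.trace + n * spread A := by rw [hnorm_sum]; gcongr
  rw [div_le_iff₀ (by positivity)]
  linarith
end

section
/- Let A be a 2×2 real matrix with nonnegative entries, spectral radius r(A) = 1, and a_{11} = 0. Then the spread of A satisfies s(A) ≥ 1. -/
open Matrix Polynomial

/-!
With `a₁₁ = 0` and `a₁₂ a₂₁ ≥ 0` the determinant is `≤ 0`, so the characteristic polynomial
`X² - tr A · X + det A` has real roots `a ≥ 0 ≥ b`. Then the spread `a - b = |a| + |b|` dominates the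
spectral radius `max |a| |b| = 1`.
-/

lemma eigs_fin_two_eq_pair (A : Matrix (Fin 2) (Fin 2) ℝ) {μ ν : ℂ}
    (hadd : μ + ν = A.trace) (hmul : μ * ν = A.det) : eigs A = {μ, ν} := by
  have htrace : (A.map Complex.ofReal).trace = μ + ν := by
    rw [hadd]; exact (AddMonoidHom.map_trace Complex.ofRealHom A).symm
  have hdet : (A.map Complex.ofReal).det = μ * ν := by
    rw [hmul]; exact (Complex.ofRealHom.map_det A).symm
  have hcharpoly : (A.map Complex.ofReal).charpoly = (X - C μ) * (X - C ν) := by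
    rw [charpoly_fin_two, htrace, hdet, C_add, C_mul]; ring
  rw [eigs, hcharpoly, roots_mul (mul_ne_zero (X_sub_C_ne_zero μ) (X_sub_C_ne_zero ν)),
    roots_X_sub_C, roots_X_sub_C]
  rfl

section PairOfEigenvalues

variable {n : ℕ} {A : Matrix (Fin n) (Fin n) ℝ} {μ ν : ℂ}

lemma specRad_eq_max_of_eigs_eq_pair (h : eigs A = {μ, ν}) : specRad A = max ‖μ‖ ‖ν‖ := by
  have hset : {r : ℝ | ∃ ξ ∈ eigs A, r = ‖ξ‖} = {‖μ‖, ‖ν‖} := by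
    ext r; simp [h, eq_comm]
  rw [specRad, hset, csSup_pair]

lemma spread_eq_of_eigs_eq_pair (h : eigs A = {μ, ν}) : spread A = ‖μ - ν‖ := by
  apply IsGreatest.csSup_eq
  refine ⟨⟨μ, by simp [h], ν, by simp [h], rfl⟩, ?_⟩
  rintro r ⟨ξ, hξ, ζ, hζ, rfl⟩
  simp only [h, Multiset.insert_eq_cons, Multiset.mem_cons, Multiset.mem_singleton] at hξ hζ
  rcases hξ with rfl | rfl <;> rcases hζ with rfl | rfl <;> simp [norm_sub_rev]

end PairOfEigenvalues

lemma exists_nonneg_nonpos_add_eq_mul_eq {t d : ℝ} (hd : d ≤ 0) :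
    ∃ a b : ℝ, 0 ≤ a ∧ b ≤ 0 ∧ a + b = t ∧ a * b = d := by
  set s := √(t ^ 2 - 4 * d)
  have hs : s ^ 2 = t ^ 2 - 4 * d := Real.sq_sqrt (by nlinarith)
  have hts : |t| ≤ s := Real.abs_le_sqrt (by linarith)
  refine ⟨(t + s) / 2, (t - s) / 2, ?_, ?_, by ring, by linear_combination -hs / 4⟩ <;>
    linarith [le_abs_self t, neg_abs_le t]

lemma specRad_le_spread_of_det_nonpos (A : Matrix (Fin 2) (Fin 2) ℝ) (hdet : A.det ≤ 0) :
    specRad A ≤ spread A := by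
  obtain ⟨a, b, ha, hb, hadd, hmul⟩ := exists_nonneg_nonpos_add_eq_mul_eq (t := A.trace) hdet
  have heigs := eigs_fin_two_eq_pair A (μ := a) (ν := b) (by exact_mod_cast hadd)
    (by exact_mod_cast hmul)
  rw [specRad_eq_max_of_eigs_eq_pair heigs, spread_eq_of_eigs_eq_pair heigs,
    ← Complex.ofReal_sub, Complex.norm_real, Complex.norm_real, Complex.norm_real]
  simp only [Real.norm_eq_abs, abs_of_nonneg ha, abs_of_nonpos hb,
    abs_of_nonneg (sub_nonneg.2 (hb.trans ha))]
  exact max_le (by linarith) (by linarith)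

theorem spread_ge_two_by_two (A : Matrix (Fin 2) (Fin 2) ℝ)
    (hA : ∀ i j, 0 ≤ A i j) (hr : specRad A = 1) (h11 : A 0 0 = 0) :
    1 ≤ spread A := by
  have hdet : A.det ≤ 0 := by
    rw [det_fin_two, h11, zero_mul, zero_sub, neg_nonpos]
    exact mul_nonneg (hA 0 1) (hA 1 0)
  exact hr ▸ specRad_le_spread_of_det_nonpos A hdet
end

section
/- The 3×3 real matrix A = (1/4)·[[0,2,0],[0,3,1],[2,0,3]] has characteristic polynomial (X − 1)(X − 1/4)² over ℂ; in particular A is nonnegative, a_{11} = 0, its spectral radius is r(A) = 1, and its spread is s(A) = 3/4. -/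
open Matrix Polynomial

theorem eigs_eq_of_charpoly_eq_prod {n : ℕ} {A : Matrix (Fin n) (Fin n) ℝ} {s : Multiset ℂ}
    (h : (A.map Complex.ofReal).charpoly = (s.map fun μ => X - C μ).prod) : eigs A = s := by
  rw [eigs, h, roots_multiset_prod_X_sub_C]

theorem specRad_eq_of_isGreatest {n : ℕ} {A : Matrix (Fin n) (Fin n) ℝ} {r : ℝ}
    (hle : ∀ μ ∈ eigs A, ‖μ‖ ≤ r) (hmem : ∃ μ ∈ eigs A, ‖μ‖ = r) : specRad A = r := by
  refine IsGreatest.csSup_eq ⟨?_, ?_⟩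
  · obtain ⟨μ, hμ, rfl⟩ := hmem
    exact ⟨μ, hμ, rfl⟩
  · rintro _ ⟨μ, hμ, rfl⟩
    exact hle μ hμ

theorem spread_eq_of_isGreatest {n : ℕ} {A : Matrix (Fin n) (Fin n) ℝ} {r : ℝ}
    (hle : ∀ μ ∈ eigs A, ∀ ν ∈ eigs A, ‖μ - ν‖ ≤ r)
    (hmem : ∃ μ ∈ eigs A, ∃ ν ∈ eigs A, ‖μ - ν‖ = r) : spread A = r := by
  refine IsGreatest.csSup_eq ⟨?_, ?_⟩
  · obtain ⟨μ, hμ, ν, hν, rfl⟩ := hmem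
    exact ⟨μ, hμ, ν, hν, rfl⟩
  · rintro _ ⟨μ, hμ, ν, hν, rfl⟩
    exact hle μ hμ ν hν

theorem charpoly_map_ofReal_example :
    (((1 / 4 : ℝ) • !![0, 2, 0; 0, 3, 1; 2, 0, 3] : Matrix (Fin 3) (Fin 3) ℝ).map
      Complex.ofReal).charpoly = (X - C 1) * (X - C (1 / 4)) ^ 2 := by
  rw [Matrix.charpoly, Matrix.det_fin_three]
  refine Polynomial.funext fun x => ?_
  simp only [one_div, smul_of, smul_cons, smul_eq_mul, mul_zero, smul_empty, mul_one, Fin.isValue,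
    charmatrix_apply_eq, map_apply, of_apply, cons_val', cons_val_zero, cons_val_fin_one,
    Complex.ofReal_zero, map_zero, sub_zero, cons_val_one, Complex.ofReal_mul, Complex.ofReal_inv,
    Complex.ofReal_ofNat, map_mul, cons_val, ne_eq, Fin.reduceEq, not_false_eq_true,
    charmatrix_apply_ne, mul_neg, X_mul_C, neg_zero, zero_ne_one, one_ne_zero, zero_mul, neg_mul,
    neg_neg, add_zero, eval_add, eval_mul, eval_X, eval_sub, eval_C, eval_neg, map_one, eval_one,
    eval_pow]
  ring

theorem example_three_by_three (A : Matrix (Fin 3) (Fin 3) ℝ)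
    (hA : A = (1 / 4 : ℝ) • !![0, 2, 0; 0, 3, 1; 2, 0, 3]) :
    (A.map Complex.ofReal).charpoly = (X - C 1) * (X - C (1 / 4)) ^ 2 ∧
    (∀ i j, 0 ≤ A i j) ∧ A 0 0 = 0 ∧ specRad A = 1 ∧ spread A = 3 / 4 := by
  have hcp : (A.map Complex.ofReal).charpoly = (X - C 1) * (X - C (1 / 4)) ^ 2 :=
    hA ▸ charpoly_map_ofReal_example
  have heigs : eigs A = {1, 1 / 4, 1 / 4} := eigs_eq_of_charpoly_eq_prod <| hcp.trans <| by
    simp only [Multiset.insert_eq_cons, Multiset.map_cons, Multiset.prod_cons,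
      Multiset.map_singleton, Multiset.prod_singleton]
    ring
  have hmem : ∀ μ ∈ eigs A, μ = 1 ∨ μ = 1 / 4 := by
    simp only [heigs, Multiset.insert_eq_cons, Multiset.mem_cons, Multiset.mem_singleton]
    tauto
  have hone : (1 : ℂ) ∈ eigs A := by simp [heigs]
  have hquarter : (1 / 4 : ℂ) ∈ eigs A := by
    simp only [heigs, Multiset.insert_eq_cons, Multiset.mem_cons, Multiset.mem_singleton]
    tauto
  refine ⟨hcp, ?_, by simp [hA], ?_, ?_⟩
  · subst hA
    intro i j
    fin_cases i <;> fin_cases j <;> norm_num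
  · refine specRad_eq_of_isGreatest (fun μ hμ => ?_) ⟨1, hone, norm_one⟩
    rcases hmem μ hμ with rfl | rfl <;> norm_num
  · refine spread_eq_of_isGreatest (fun μ hμ ν hν => ?_)
      ⟨1, hone, 1 / 4, hquarter, by norm_num [Complex.norm_def, Complex.normSq]⟩
    rcases hmem μ hμ with rfl | rfl <;> rcases hmem ν hν with rfl | rfl <;>
      norm_num [Complex.norm_def, Complex.normSq]
end

section
/- Fix n ≥ 2. Define n×n real matrices: A with entries a_{i,i+1} = n−i for 1 ≤ i ≤ n−1, a_{i,i} = n for 2 ≤ i ≤ n, a_{i,j} = 2 whenever i − j is an even positive integer, and all other entries zero; U upper triangular with u_{1,1} = 2(n−1), u_{i,i} = n−2 for 2 ≤ i ≤ n, u_{i,i+1} = n−i for 1 ≤ i ≤ n−1, and all other entries zero; and S lower triangular with s_{i,i} = 1 for all i, s_{i,j} = 2 for i > j, and all other entries zero. Then S is invertible and S·U = A·S; in particular A is similar to U. -/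
open Matrix Polynomial

/-!
With `N` the subdiagonal shift, `S` is the Cayley transform `(1 + N)(1 - N)⁻¹`: indeed
`S (1 - N) = (1 - N) S = 1 + N`. Multiplying `S U = A S` by the unitriangular `1 - N` on both sides
turns it into `(1 + N) U (1 - N) = (1 - N) A (1 + N)`. Conjugating by `1 ± N` only mixes each entry
with its neighbours, so this is an identity between entries of `U` and `A` at distance at most one;
in particular the parity pattern of `A` below the diagonal telescopes away.
-/

namespace Matrix

theorem isUnit_of_isLowerTriangular {m R : Type*} [Fintype m] [DecidableEq m] [LinearOrder m]
    [CommRing R] {M : Matrix m m R} (hM : M.IsLowerTriangular) (hdiag : ∀ i, IsUnit (M i i)) :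
    IsUnit M := by
  rw [isUnit_iff_isUnit_det, det_of_isLowerTriangular M hM]
  exact IsUnit.prod_univ_iff.mpr hdiag

section Shift

variable {R : Type*} {n : ℕ}

def subdiagShift [Zero R] [One R] (n : ℕ) : Matrix (Fin n) (Fin n) R :=
  of fun i j => if (i : ℕ) = j + 1 then 1 else 0

def corner (n : ℕ) (f : ℕ → ℕ → R) : Matrix (Fin n) (Fin n) R :=
  of fun i j => f i j

theorem subdiagShift_isLowerTriangular [Zero R] [One R] :
    (subdiagShift n : Matrix (Fin n) (Fin n) R).IsLowerTriangular := by
  intro i j hij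
  simp only [subdiagShift, of_apply, OrderDual.toDual_lt_toDual, Fin.lt_def] at *
  rw [if_neg (by omega)]

theorem corner_isLowerTriangular [Zero R] {f : ℕ → ℕ → R} (hf : ∀ i j, i < j → f i j = 0) :
    (corner n f).IsLowerTriangular :=
  fun _ _ hij => hf _ _ (Fin.lt_def.mp (OrderDual.toDual_lt_toDual.mp hij))

variable [CommSemiring R]

theorem subdiagShift_mul_corner (f : ℕ → ℕ → R) :
    subdiagShift n * corner n f = corner n fun i j => if i = 0 then 0 else f (i - 1) j := by
  ext i j
  simp only [mul_apply, subdiagShift, corner, of_apply, ite_mul, one_mul, zero_mul]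
  split_ifs with hi
  · exact Finset.sum_eq_zero fun k _ => if_neg (by omega)
  · rw [Finset.sum_eq_single ⟨i - 1, by omega⟩
      (fun k _ hk => if_neg fun h => hk (Fin.ext (by simp; omega))) (by simp)]
    simp
    omega

theorem corner_mul_subdiagShift (f : ℕ → ℕ → R) (hf : ∀ i < n, f i n = 0) :
    corner n f * subdiagShift n = corner n fun i j => f i (j + 1) := by
  ext i j
  simp only [mul_apply, subdiagShift, corner, of_apply, mul_ite, mul_one, mul_zero]
  by_cases hj : (j : ℕ) + 1 < n
  · rw [Finset.sum_eq_single ⟨j + 1, hj⟩ (fun k _ hk => if_neg fun h => hk (Fin.ext h)) (by simp)]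
    simp
  · rw [show (j : ℕ) + 1 = n by omega, hf i i.isLt]
    exact Finset.sum_eq_zero fun k _ => if_neg (by omega)

theorem one_add_smul_subdiagShift_mul_corner_mul (a b : R) (f : ℕ → ℕ → R)
    (hf : ∀ i < n, f i n = 0) :
    (1 + a • subdiagShift n) * corner n f * (1 + b • subdiagShift n) =
      corner n fun i j =>
        f i j + b * f i (j + 1) + a * (if i = 0 then 0 else f (i - 1) j + b * f (i - 1) (j + 1)) := by
  have hf_shift : ∀ i < n, (if i = 0 then 0 else f (i - 1) n) = 0 := fun i hi => by
    split_ifs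
    · rfl
    · exact hf _ (by omega)
  simp only [add_mul, mul_add, one_mul, mul_one, smul_mul_assoc, mul_smul_comm,
    subdiagShift_mul_corner]
  rw [corner_mul_subdiagShift _ hf, corner_mul_subdiagShift _ hf_shift]
  ext i j
  simp only [corner, add_apply, smul_apply, of_apply, smul_eq_mul]
  split_ifs <;> ring

end Shift

end Matrix

theorem SemiconjBy.of_mul_eq_of_mul_eq {M : Type*} [Monoid M] {S T P U A : M} (hT : IsUnit T)
    (hST : S * T = P) (hTS : T * S = P) (h : P * U * T = T * A * P) : SemiconjBy S U A := by
  refine hT.mul_left_cancel (hT.mul_right_cancel ?_)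
  calc T * (S * U) * T = P * U * T := by rw [← hTS, mul_assoc T S U]
    _ = T * A * P := h
    _ = T * (A * S) * T := by rw [← hST, mul_assoc, mul_assoc, mul_assoc]

def entryA (n i j : ℕ) : ℝ :=
  if j = i + 1 then (n : ℝ) - (i + 1)
  else if i = j ∧ 1 ≤ i then n
  else if j < i ∧ Even (i - j) then 2
  else 0

def entryU (n i j : ℕ) : ℝ :=
  if j = i + 1 then (n : ℝ) - (i + 1)
  else if i = j then (if i = 0 then 2 * ((n : ℝ) - 1) else n - 2)
  else 0

def entryS (i j : ℕ) : ℝ :=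
  if i = j then 1 else if j < i then 2 else 0

/-- The two sides are the `(i, j)` entries of `(1 + N) U (1 - N)` and `(1 - N) A (1 + N)`. -/
theorem entryU_conj_eq_entryA_conj (n i j : ℕ) :
    entryU n i j - entryU n i (j + 1)
      + (if i = 0 then 0 else entryU n (i - 1) j - entryU n (i - 1) (j + 1))
    = entryA n i j + entryA n i (j + 1)
      - (if i = 0 then 0 else entryA n (i - 1) j + entryA n (i - 1) (j + 1)) := by
  rcases i with _ | i
  · rcases j with _ | _ | j <;> simp [entryU, entryA]
    ring
  · obtain h | rfl | rfl | rfl | rfl | h :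
        j + 2 ≤ i ∨ j + 1 = i ∨ j = i ∨ j = i + 1 ∨ j = i + 2 ∨ i + 3 ≤ j := by
      omega
    all_goals
      simp (disch := omega) only [entryU, entryA, Nat.even_iff, if_pos, if_neg, if_true, if_false,
        add_tsub_cancel_right, Nat.add_eq_zero_iff, one_ne_zero, and_false, true_and, and_true,
        Nat.le_add_left]
      try split_ifs
      all_goals first | omega | (push_cast; ring1)

theorem corner_entryS_mul_one_sub_subdiagShift (n : ℕ) :
    corner n entryS * (1 - subdiagShift n) = 1 + subdiagShift n := by
  rw [mul_sub, mul_one, corner_mul_subdiagShift _ fun i hi => by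
    simp only [entryS]; rw [if_neg (by omega), if_neg (by omega)]]
  ext i j
  simp only [corner, subdiagShift, entryS, Matrix.sub_apply, Matrix.add_apply, one_apply, of_apply, Fin.ext_iff]
  split_ifs <;> first | omega | norm_num

theorem one_sub_subdiagShift_mul_corner_entryS (n : ℕ) :
    (1 - subdiagShift n) * corner n entryS = 1 + subdiagShift n := by
  rw [sub_mul, one_mul, subdiagShift_mul_corner]
  ext i j
  simp only [corner, subdiagShift, entryS, Matrix.sub_apply, Matrix.add_apply, one_apply, of_apply, Fin.ext_iff]
  split_ifs <;> first | omega | norm_num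

theorem one_add_subdiagShift_conj_entryU (n : ℕ) :
    (1 + subdiagShift n) * corner n (entryU n) * (1 - subdiagShift n) =
      (1 - subdiagShift n) * corner n (entryA n) * (1 + subdiagShift n) := by
  have hU : ∀ i < n, entryU n i n = 0 := fun i hi => by
    simp only [entryU]
    split_ifs <;> first | omega | (push_cast [*]; ring)
  have hA : ∀ i < n, entryA n i n = 0 := fun i hi => by
    simp only [entryA]
    split_ifs <;> first | omega | (push_cast [*]; ring)
  have hU_conj := one_add_smul_subdiagShift_mul_corner_mul 1 (-1) _ hU
  have hA_conj := one_add_smul_subdiagShift_mul_corner_mul (-1) 1 _ hA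
  simp only [one_smul, neg_one_smul, ← sub_eq_add_neg] at hU_conj hA_conj
  rw [hU_conj, hA_conj]
  ext i j
  have := entryU_conj_eq_entryA_conj n i j
  simp only [corner, of_apply]
  split_ifs at * <;> linarith

theorem isUnit_corner_entryS (n : ℕ) : IsUnit (corner n entryS) :=
  isUnit_of_isLowerTriangular
    (corner_isLowerTriangular fun i j hij => by
      simp only [entryS]; rw [if_neg (by omega), if_neg (by omega)])
    (fun i => by simp [corner, entryS])

theorem isUnit_one_sub_subdiagShift (n : ℕ) :
    IsUnit (1 - subdiagShift n : Matrix (Fin n) (Fin n) ℝ) :=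
  isUnit_of_isLowerTriangular (blockTriangular_one.sub subdiagShift_isLowerTriangular)
    (fun i => by simp [subdiagShift])

theorem similar_to_upper_triangular_general (n : ℕ)
    (A U S : Matrix (Fin n) (Fin n) ℝ)
    (hA : A = Matrix.of fun (i j : Fin n) =>
      if (j : ℕ) = (i : ℕ) + 1 then (n : ℝ) - ((i : ℕ) + 1)
      else if i = j ∧ 1 ≤ (i : ℕ) then (n : ℝ)
      else if (j : ℕ) < (i : ℕ) ∧ Even ((i : ℕ) - (j : ℕ)) then 2
      else 0)
    (hU : U = Matrix.of fun (i j : Fin n) =>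
      if (j : ℕ) = (i : ℕ) + 1 then (n : ℝ) - ((i : ℕ) + 1)
      else if i = j then (if (i : ℕ) = 0 then 2 * ((n : ℝ) - 1) else (n : ℝ) - 2)
      else 0)
    (hS : S = Matrix.of fun (i j : Fin n) =>
      if i = j then 1 else if (j : ℕ) < (i : ℕ) then 2 else 0) :
    IsUnit S ∧ S * U = A * S := by
  have hA' : A = corner n (entryA n) := by simp only [hA, corner, entryA, Fin.val_inj]
  have hU' : U = corner n (entryU n) := by simp only [hU, corner, entryU, Fin.val_inj]
  have hS' : S = corner n entryS := by simp only [hS, corner, entryS, Fin.val_inj]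
  subst hA' hU' hS'
  exact ⟨isUnit_corner_entryS n,
    SemiconjBy.of_mul_eq_of_mul_eq (isUnit_one_sub_subdiagShift n)
      (corner_entryS_mul_one_sub_subdiagShift n) (one_sub_subdiagShift_mul_corner_entryS n)
      (one_add_subdiagShift_conj_entryU n)⟩

theorem similar_to_upper_triangular (n : ℕ) (hn : 2 ≤ n)
    (A U S : Matrix (Fin n) (Fin n) ℝ)
    (hA : A = Matrix.of fun (i j : Fin n) =>
      if (j : ℕ) = (i : ℕ) + 1 then (n : ℝ) - ((i : ℕ) + 1)
      else if i = j ∧ 1 ≤ (i : ℕ) then (n : ℝ)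
      else if (j : ℕ) < (i : ℕ) ∧ Even ((i : ℕ) - (j : ℕ)) then 2
      else 0)
    (hU : U = Matrix.of fun (i j : Fin n) =>
      if (j : ℕ) = (i : ℕ) + 1 then (n : ℝ) - ((i : ℕ) + 1)
      else if i = j then (if (i : ℕ) = 0 then 2 * ((n : ℝ) - 1) else (n : ℝ) - 2)
      else 0)
    (hS : S = Matrix.of fun (i j : Fin n) =>
      if i = j then 1 else if (j : ℕ) < (i : ℕ) then 2 else 0) :
    IsUnit S ∧ S * U = A * S :=
  similar_to_upper_triangular_general n A U S hA hU hS
end
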